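/- arXiv:2303.09255 — 3 statements merged into one kernel-verified Lean document; each statement's English description precedes it below -/
import Mathlib

section
/- Let X₁,...,Xₙ be i.i.d. classical random variables where each Xᵢ takes the value ⊥ with probability 1−p and otherwise takes a value in a finite alphabet 𝒳 with |𝒳 ∪ {⊥}| = d, and let Y₁,...,Yₙ be the indicator variables Yᵢ = 1[Xᵢ ≠ ⊥]. Then for any ε > 0, the ε-smooth conditional max-entropy satisfies H^ε_max(X₁ⁿ | Y₁ⁿ) ≤ n·p·log d + √((n/2)·ln(2/ε²))·log d. -/
/-!
Smooth by cutting off the atypical outcomes, those in which more than `m = n p + t` of the `Xᵢ`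
differ from `⊥`. By Hoeffding's inequality for the Bernoulli(`p`) indicators `Yᵢ` this removes
mass at most `exp (-2 t² / n) = ε² / 2`, so the truncated state is `ε`-close in purified
distance. Given `Y = y` with at most `m` ones, `X` takes at most `d ^ m` values, and
Cauchy–Schwarz over `y` bounds the max-entropy of the truncated state by `m log d`.
-/

noncomputable section

/-- A subnormalised classical distribution on a finite type. -/
def SubDist {T : Type*} [Fintype T] (P : T → ℝ) : Prop :=
  (∀ t, 0 ≤ P t) ∧ ∑ t, P t ≤ 1

/-- Generalised fidelity between subnormalised classical distributions. -/
noncomputable def cGenFidelity {T : Type*} [Fintype T] (P Q : T → ℝ) : ℝ :=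
  ((∑ t, Real.sqrt (P t * Q t)) +
    Real.sqrt ((1 - ∑ t, P t) * (1 - ∑ t, Q t))) ^ 2

/-- Purified distance between subnormalised classical distributions. -/
noncomputable def cPurifiedDist {T : Type*} [Fintype T] (P Q : T → ℝ) : ℝ :=
  Real.sqrt (1 - cGenFidelity P Q)

/-- Conditional max-entropy `H_max(X|Y)_P = max_σ log F(P_{XY}, 𝟙_X ⊗ σ_Y)` of a
classical joint distribution. -/
noncomputable def cHmax {A B : Type*} [Fintype A] [Fintype B] (P : A × B → ℝ) : ℝ :=
  sSup {h : ℝ | ∃ σ : B → ℝ, (∀ y, 0 ≤ σ y) ∧ (∑ y, σ y) ≤ 1 ∧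
    h = Real.logb 2 ((∑ x : A, ∑ y : B, Real.sqrt (P (x, y) * σ y)) ^ 2)}

/-- `ε`-smooth conditional max-entropy. -/
noncomputable def cHmaxSmooth {A B : Type*} [Fintype A] [Fintype B]
    (ε : ℝ) (P : A × B → ℝ) : ℝ :=
  sInf {h : ℝ | ∃ P' : A × B → ℝ, SubDist P' ∧ cPurifiedDist P' P ≤ ε ∧ h = cHmax P'}

open scoped Classical in
/-- The i.i.d. joint distribution of `X₁ⁿ` (values in `Option 𝒳`, with `none = ⊥`)
together with the indicator variables `Yᵢ = 1[Xᵢ ≠ ⊥]`. -/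
noncomputable def jointXY {X : Type*} [Fintype X] (n : ℕ) (q : Option X → ℝ) :
    ((Fin n → Option X) × (Fin n → Bool)) → ℝ :=
  fun xy => if ∀ i, xy.2 i = (xy.1 i).isSome then ∏ i, q (xy.1 i) else 0

open Finset Real

section ClassicalEntropies

variable {T A B : Type*} [Fintype T] [Fintype A] [Fintype B]

lemma cPurifiedDist_indicator_le {P : T → ℝ} (hP0 : ∀ t, 0 ≤ P t) (hP1 : ∑ t, P t = 1)
    (s : Set T) : cPurifiedDist (s.indicator P) P ≤ √(2 * ∑ t, sᶜ.indicator P t) := by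
  set τ := ∑ t, sᶜ.indicator P t
  have hτ : 0 ≤ τ := sum_nonneg fun t _ => Set.indicator_nonneg (fun t _ => hP0 t) t
  have hsqrt : ∀ t, √(s.indicator P t * P t) = s.indicator P t := fun t => by
    by_cases ht : t ∈ s <;> simp [ht, sqrt_mul_self (hP0 t)]
  have hmass : ∑ t, s.indicator P t = 1 - τ := by
    rw [← hP1, eq_sub_iff_add_eq, ← sum_add_distrib]
    simp only [Set.indicator_self_add_compl_apply]
  unfold cPurifiedDist cGenFidelity
  rw [Finset.sum_congr rfl fun t _ => hsqrt t, hP1, sub_self, mul_zero, sqrt_zero, add_zero,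
    hmass]
  exact sqrt_le_sqrt (by nlinarith)

lemma cHmax_nonneg (P : A × B → ℝ) : 0 ≤ cHmax P := by
  unfold cHmax
  by_cases hbdd : BddAbove {h : ℝ | ∃ σ : B → ℝ, (∀ y, 0 ≤ σ y) ∧ ∑ y, σ y ≤ 1 ∧
      h = logb 2 ((∑ x : A, ∑ y : B, √(P (x, y) * σ y)) ^ 2)}
  · exact le_csSup hbdd ⟨0, fun _ => le_rfl, by simp, by simp⟩
  · rw [Real.sSup_of_not_bddAbove hbdd]

lemma cHmaxSmooth_le_cHmax {ε : ℝ} {P P' : A × B → ℝ} (hP' : SubDist P')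
    (hdist : cPurifiedDist P' P ≤ ε) : cHmaxSmooth ε P ≤ cHmax P' :=
  csInf_le ⟨0, by rintro _ ⟨P'', -, -, rfl⟩; exact cHmax_nonneg P''⟩ ⟨P', hP', hdist, rfl⟩

lemma cHmax_le_logb {P : A × B → ℝ} (hP : SubDist P) {D : ℝ} (hD : 1 ≤ D)
    (h : ∀ y, (∑ x, √(P (x, y))) ^ 2 ≤ D * ∑ x, P (x, y)) : cHmax P ≤ logb 2 D := by
  refine csSup_le ⟨_, 0, fun _ => le_rfl, by simp, rfl⟩ ?_
  rintro _ ⟨σ, hσ0, hσ1, rfl⟩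
  have hfactor : ∑ x, ∑ y, √(P (x, y) * σ y) = ∑ y, (∑ x, √(P (x, y))) * √(σ y) := by
    rw [Finset.sum_comm]
    simp_rw [sqrt_mul (hP.1 _), Finset.sum_mul]
  have hCS : (∑ x, ∑ y, √(P (x, y) * σ y)) ^ 2 ≤ D :=
    calc (∑ x, ∑ y, √(P (x, y) * σ y)) ^ 2
        ≤ (∑ y, (∑ x, √(P (x, y))) ^ 2) * ∑ y, √(σ y) ^ 2 := by
          rw [hfactor]; exact sum_mul_sq_le_sq_mul_sq _ _ _
      _ ≤ (D * ∑ t, P t) * 1 := by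
          refine mul_le_mul ?_ ?_ (sum_nonneg fun y _ => sq_nonneg _)
            (mul_nonneg (by linarith) (sum_nonneg fun t _ => hP.1 t))
          · rw [Fintype.sum_prod_type_right, Finset.mul_sum]
            exact sum_le_sum fun y _ => h y
          · simpa [sq_sqrt (hσ0 _)] using hσ1
      _ ≤ D := by nlinarith [hP.2]
  rcases (sq_nonneg (∑ x, ∑ y, √(P (x, y) * σ y))).eq_or_lt with h0 | hpos
  · rw [← h0, logb_zero]
    exact logb_nonneg one_lt_two hD
  · exact logb_le_logb_of_le one_lt_two hpos hCS

end ClassicalEntropies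

section JointXY

variable {X : Type*} [Fintype X] {n : ℕ}

lemma jointXY_nonneg {q : Option X → ℝ} (hq0 : ∀ v, 0 ≤ q v)
    (t : (Fin n → Option X) × (Fin n → Bool)) : 0 ≤ jointXY n q t := by
  unfold jointXY
  split
  · exact prod_nonneg fun i _ => hq0 _
  · exact le_rfl

lemma sqrt_jointXY {q : Option X → ℝ} (hq0 : ∀ v, 0 ≤ q v)
    (t : (Fin n → Option X) × (Fin n → Bool)) :
    √(jointXY n q t) = jointXY n (fun v => √(q v)) t := by
  unfold jointXY
  split
  · exact sqrt_prod _ fun i _ => hq0 _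
  · exact sqrt_zero

lemma sum_jointXY_fiber (r : Option X → ℝ) (y : Fin n → Bool) :
    ∑ x, jointXY n r (x, y) = ∏ i, if y i then ∑ v, r (some v) else r none := by
  classical
  calc ∑ x, jointXY n r (x, y)
      = ∑ x : Fin n → Option X, ∏ i, if y i = (x i).isSome then r (x i) else 0 := by
        simp only [jointXY, prod_ite_zero, mem_univ, true_implies]
    _ = ∏ i, ∑ v : Option X, if y i = v.isSome then r v else 0 :=
        (Fintype.prod_sum fun i v => if y i = v.isSome then r v else 0).symm
    _ = _ := by
        refine prod_congr rfl fun i _ => ?_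
        cases y i <;> simp [Fintype.sum_option]

lemma sum_jointXY_fst {q : Option X → ℝ} (hq1 : ∑ v, q v = 1) (y : Fin n → Bool) :
    ∑ x, jointXY n q (x, y) = ∏ i, if y i then 1 - q none else q none := by
  rw [sum_jointXY_fiber, ← hq1, Fintype.sum_option, add_sub_cancel_left]

lemma sum_jointXY {q : Option X → ℝ} (hq1 : ∑ v, q v = 1) : ∑ t, jointXY n q t = 1 := by
  classical
  simp_rw [Fintype.sum_prod_type_right, sum_jointXY_fst hq1]
  refine (Fintype.prod_sum fun _ (b : Bool) => if b then 1 - q none else q none).symm.trans ?_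
  simp

-- Given `Y = y`, `X` ranges over at most `|𝒳| ^ #{i | yᵢ}` values.
lemma sq_sum_sqrt_jointXY_le {q : Option X → ℝ} (hq0 : ∀ v, 0 ≤ q v) (y : Fin n → Bool) :
    (∑ x, √(jointXY n q (x, y))) ^ 2 ≤
      (Fintype.card X : ℝ) ^ #{i | y i} * ∑ x, jointXY n q (x, y) := by
  have hsome : (∑ v, √(q (some v))) ^ 2 ≤ Fintype.card X * ∑ v, q (some v) := by
    simpa [sq_sqrt (hq0 _)] using
      sq_sum_le_card_mul_sum_sq (s := univ) (f := fun v => √(q (some v)))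
  simp_rw [sqrt_jointXY hq0, sum_jointXY_fiber]
  calc (∏ i, if y i then ∑ v, √(q (some v)) else √(q none)) ^ 2
      = ∏ i, if y i then (∑ v, √(q (some v))) ^ 2 else q none := by
        rw [← prod_pow]
        exact prod_congr rfl fun i _ => by split <;> simp [sq_sqrt (hq0 _)]
    _ ≤ ∏ i, if y i then Fintype.card X * ∑ v, q (some v) else q none := by
        refine prod_le_prod (fun i _ => ?_) fun i _ => ?_
        · split
          · positivity
          · exact hq0 none
        · split
          · exact hsome
          · exact le_rfl
    _ = _ := by simp [prod_ite, mul_pow, mul_assoc]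

end JointXY

section Hoeffding

open MeasureTheory ProbabilityTheory unitInterval

-- Hoeffding's inequality for `n` i.i.d. Bernoulli(`p`) trials.
lemma sum_prod_bernoulli_ge_le (n : ℕ) (p : I) {t : ℝ} (ht : 0 ≤ t) :
    ∑ y : Fin n → Bool with (n : ℝ) * p + t ≤ #{i | y i},
      ∏ i, (if y i then (p : ℝ) else 1 - p) ≤ exp (-2 * t ^ 2 / n) := by
  classical
  set μ : Measure (Fin n → Bool) := Measure.pi fun _ => Ber(true, false, p)
  let Z : Bool → ℝ := fun b => (if b then 1 else 0) - p
  have hindep : iIndepFun (fun i (y : Fin n → Bool) => Z (y i)) μ :=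
    iIndepFun_pi (X := fun _ => Z) fun _ => by fun_prop
  have hZ : HasSubgaussianMGF Z (1 / 4) Ber(true, false, p) := by
    have := hasSubgaussianMGF_of_mem_Icc (μ := Ber(true, false, p))
      (X := fun b : Bool => if b then (1 : ℝ) else 0) (a := 0) (b := 1) (by fun_prop)
      (ae_of_all _ fun b => by cases b <;> simp)
    convert this using 1
    · simp [Z, integral_bernoulliMeasure]
    · ext; norm_num
  have hsub : ∀ i ∈ (univ : Finset (Fin n)),
      HasSubgaussianMGF (fun y : Fin n → Bool => Z (y i)) (1 / 4) μ := fun i _ => by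
    refine HasSubgaussianMGF.of_map (X := Z) (Y := Function.eval i)
      (measurable_pi_apply (X := fun _ : Fin n => Bool) i).aemeasurable ?_
    rwa [(measurePreserving_eval _ i).map_eq]
  have hoeffding := HasSubgaussianMGF.measure_sum_ge_le_of_iIndepFun hindep hsub ht
  have hset : {y : Fin n → Bool | t ≤ ∑ i, Z (y i)} =
      ↑({y | (n : ℝ) * p + t ≤ #{i | y i}} : Finset (Fin n → Bool)) := by
    ext y
    simp only [Z, sum_sub_distrib, sum_boole, sum_const, card_univ, Fintype.card_fin,
      nsmul_eq_mul, Set.mem_ofPred_eq, coe_filter, mem_univ, true_and]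
    constructor <;> intro h <;> linarith
  rw [hset, ← sum_measureReal_singleton] at hoeffding
  convert hoeffding using 1
  · refine sum_congr rfl fun y _ => ?_
    simp only [μ, measureReal_def, Measure.pi_singleton, ENNReal.toReal_prod]
    exact prod_congr rfl fun i _ => by cases y i <;> simp
  · simp only [sum_const, card_univ, Fintype.card_fin, nsmul_eq_mul, NNReal.coe_mul,
      NNReal.coe_natCast, NNReal.coe_div, NNReal.coe_one, NNReal.coe_ofNat]
    ring_nf

lemma sum_prod_bernoulli_gt_le (n : ℕ) (p : I) {δ : ℝ} (hδ : 0 < δ) :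
    ∑ y : Fin n → Bool with (n : ℝ) * p + √(n / 2 * log δ⁻¹) < #{i | y i},
      ∏ i, (if y i then (p : ℝ) else 1 - p) ≤ δ := by
  set t := √(n / 2 * log δ⁻¹) with ht
  rcases n.eq_zero_or_pos with rfl | hn
  · have : ¬t < 0 := (sqrt_nonneg _).not_gt
    simp [this, hδ.le]
  calc _ ≤ ∑ y : Fin n → Bool with (n : ℝ) * p + t ≤ #{i | y i},
        ∏ i, (if y i then (p : ℝ) else 1 - p) :=
        sum_le_sum_of_subset_of_nonneg (monotone_filter_right _ fun _ _ h => h.le)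
          fun y _ _ => prod_nonneg fun i _ => by split <;> simp [p.2.1, p.2.2]
    _ ≤ exp (-2 * t ^ 2 / n) := sum_prod_bernoulli_ge_le n p (sqrt_nonneg _)
    _ ≤ δ := by
        rcases le_or_gt 0 (log δ⁻¹) with hlog | hlog
        · rw [ht, sq_sqrt (by positivity), log_inv]
          field_simp
          exact (exp_log hδ).le
        · rw [ht, sqrt_eq_zero'.2 (by nlinarith [n.cast_nonneg (α := ℝ)])]
          rw [log_inv, neg_lt_zero, log_pos_iff hδ.le] at hlog
          simpa using hlog.le

end Hoeffding

section Truncation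

variable {X : Type*} [Fintype X] {n : ℕ} {q : Option X → ℝ}

-- The smoothed state `ρ̄` of the bound, for `m = n p + t`.
def jointXYTrunc (n : ℕ) (q : Option X → ℝ) (m : ℝ) :
    (Fin n → Option X) × (Fin n → Bool) → ℝ :=
  (Prod.snd ⁻¹' {y | (#{i | y i} : ℝ) ≤ m}).indicator (jointXY n q)

lemma subDist_jointXYTrunc (hq0 : ∀ v, 0 ≤ q v) (hq1 : ∑ v, q v = 1) (m : ℝ) :
    SubDist (jointXYTrunc n q m) := by
  refine ⟨Set.indicator_nonneg fun t _ => jointXY_nonneg hq0 t, ?_⟩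
  rw [← sum_jointXY (n := n) hq1]
  exact sum_le_sum fun t _ => Set.indicator_le_self' (fun t _ => jointXY_nonneg hq0 t) t

lemma cPurifiedDist_jointXYTrunc_le (hq0 : ∀ v, 0 ≤ q v) (hq1 : ∑ v, q v = 1) (m : ℝ) :
    cPurifiedDist (jointXYTrunc n q m) (jointXY n q) ≤
      √(2 * ∑ y : Fin n → Bool with m < #{i | y i},
        ∏ i, if y i then 1 - q none else q none) := by
  refine (cPurifiedDist_indicator_le (jointXY_nonneg hq0) (sum_jointXY hq1) _).trans_eq ?_
  rw [Fintype.sum_prod_type_right, sum_filter]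
  congr 3 with y
  by_cases hy : m < #{i | y i}
  · simp [Set.indicator_of_mem, not_le.2 hy, sum_jointXY_fst hq1]
  · simp [Set.indicator_of_notMem, not_lt.1 hy, hy]

lemma cHmax_jointXYTrunc_le (hq0 : ∀ v, 0 ≤ q v) (hq1 : ∑ v, q v = 1) {m : ℝ} (hm : 0 ≤ m) :
    cHmax (jointXYTrunc n q m) ≤ m * logb 2 (Fintype.card X + 1) := by
  have hd : (1 : ℝ) ≤ Fintype.card X + 1 := le_add_of_nonneg_left (Nat.cast_nonneg _)
  rw [← logb_rpow_eq_mul_logb_of_pos (by linarith)]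
  refine cHmax_le_logb (subDist_jointXYTrunc hq0 hq1 m) (one_le_rpow hd hm) fun y => ?_
  by_cases hy : (#{i | y i} : ℝ) ≤ m
  · have hrestrict : ∀ x, jointXYTrunc n q m (x, y) = jointXY n q (x, y) :=
      fun x => Set.indicator_of_mem (s := Prod.snd ⁻¹' _) hy _
    simp_rw [hrestrict]
    refine (sq_sum_sqrt_jointXY_le hq0 y).trans <|
      mul_le_mul_of_nonneg_right ?_ (sum_nonneg fun x _ => jointXY_nonneg hq0 _)
    calc (Fintype.card X : ℝ) ^ #{i | y i}
        ≤ (Fintype.card X + 1 : ℝ) ^ #{i | y i} := by gcongr; linarith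
      _ = (Fintype.card X + 1 : ℝ) ^ (#{i | y i} : ℝ) := (rpow_natCast _ _).symm
      _ ≤ (Fintype.card X + 1 : ℝ) ^ m := rpow_le_rpow_of_exponent_le hd hy
  · have hvanish : ∀ x, jointXYTrunc n q m (x, y) = 0 :=
      fun x => Set.indicator_of_notMem (s := Prod.snd ⁻¹' _) hy _
    simp [hvanish]

end Truncation

/-- Upper bound on the smooth conditional max-entropy of i.i.d. sparse classical data:
if each `Xᵢ` equals `⊥` with probability `1−p` and otherwise takes a value in `𝒳`
(with `|𝒳 ∪ {⊥}| = d`), and `Yᵢ` indicates `Xᵢ ≠ ⊥`, then for any `ε > 0`,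
`H^ε_max(X₁ⁿ|Y₁ⁿ) ≤ n·p·log d + √((n/2)·ln(2/ε²))·log d`. -/
theorem smooth_max_entropy_sparse_iid {X : Type*} [Fintype X] (n : ℕ)
    (p : ℝ) (hp0 : 0 ≤ p) (hp1 : p ≤ 1)
    (q : Option X → ℝ) (hq0 : ∀ x, 0 ≤ q x) (hq1 : ∑ x, q x = 1)
    (hqnone : q none = 1 - p)
    (ε : ℝ) (hε : 0 < ε) :
    cHmaxSmooth ε (jointXY n q) ≤
      (n : ℝ) * p * Real.logb 2 (Fintype.card X + 1) +
        Real.sqrt ((n : ℝ) / 2 * Real.log (2 / ε ^ 2)) *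
          Real.logb 2 (Fintype.card X + 1) := by
  set m := (n : ℝ) * p + √(n / 2 * log (2 / ε ^ 2))
  have htail := sum_prod_bernoulli_gt_le n ⟨p, hp0, hp1⟩ (δ := ε ^ 2 / 2) (by positivity)
  rw [inv_div] at htail
  have hdist : cPurifiedDist (jointXYTrunc n q m) (jointXY n q) ≤ ε := by
    refine (cPurifiedDist_jointXYTrunc_le hq0 hq1 m).trans ?_
    rw [hqnone, sub_sub_cancel]
    calc _ ≤ √(ε ^ 2) := sqrt_le_sqrt (by linarith)
      _ = ε := sqrt_sq hε.le
  calc cHmaxSmooth ε (jointXY n q)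
      ≤ cHmax (jointXYTrunc n q m) := cHmaxSmooth_le_cHmax (subDist_jointXYTrunc hq0 hq1 m) hdist
    _ ≤ m * logb 2 (Fintype.card X + 1) := cHmax_jointXYTrunc_le hq0 hq1 (by positivity)
    _ = _ := add_mul _ _ _
end
end

section
/- Let g: 𝒫_C̃ → ℝ be a crossover min-tradeoff function on distributions over a finite alphabet C̃, and define f on distributions over C = C̃ ∪ {⊥} by f(δ_c) = max(g) + (1/(1−p_key))(g(δ_c) − max(g)) for c ∈ C̃ and f(δ_⊥) = max(g), extended affinely. Then if p is of the form p(c) = (1−p_key)·p̃(c) for c ∈ C̃ and p(⊥) = p_key, it holds f(p) = g(p̃); moreover max(f) = max(g), and the variance of f (as a random variable f(δ_C) under any distribution over C of this form) satisfies 0 ≤ Var(f) ≤ (1/(1−p_key))·(max(g) − min(g))². -/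
open Finset

noncomputable section

/-- A probability distribution on a finite alphabet. -/
def IsDist {C : Type*} [Fintype C] (p : C → ℝ) : Prop :=
  (∀ c, 0 ≤ p c) ∧ ∑ c, p c = 1

/-- The point (deterministic) distribution at `c`. -/
def pointDist {C : Type*} [DecidableEq C] (c : C) : C → ℝ := fun c' => if c' = c then 1 else 0

variable {C' : Type*} [Fintype C'] [DecidableEq C'] [Nonempty C']

/-- Maximum of an affine function over the probability simplex (attained at vertices). -/
noncomputable def maxg (g : (C' → ℝ) → ℝ) : ℝ :=
  Finset.univ.sup' Finset.univ_nonempty (fun c => g (pointDist c))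

/-- Minimum of an affine function over the probability simplex (attained at vertices). -/
noncomputable def ming (g : (C' → ℝ) → ℝ) : ℝ :=
  Finset.univ.inf' Finset.univ_nonempty (fun c => g (pointDist c))

/-- Value of the induced min-tradeoff function `f` on the point distribution at
`c : Option C'` (`none` plays the role of `⊥`). -/
noncomputable def fPoint (g : (C' → ℝ) → ℝ) (pkey : ℝ) : Option C' → ℝ
  | none => maxg g
  | some c => maxg g + (1 / (1 - pkey)) * (g (pointDist c) - maxg g)

/-- The affine extension of `fPoint` to distributions on `Option C'`. -/
noncomputable def fAff (g : (C' → ℝ) → ℝ) (pkey : ℝ) (p : Option C' → ℝ) : ℝ :=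
  ∑ c : Option C', p c * fPoint g pkey c

/-- Variance of `f` as a random variable `f(δ_C)` under a distribution `q` on `Option C'`. -/
noncomputable def varf (g : (C' → ℝ) → ℝ) (pkey : ℝ) (q : Option C' → ℝ) : ℝ :=
  (∑ c : Option C', q c * (fPoint g pkey c) ^ 2) -
    (∑ c : Option C', q c * fPoint g pkey c) ^ 2

/- On a distribution of the form `p = (p_key, (1 - p_key) p̃)` the point `⊥` contributes
`p_key · max g` and the rescaling by `1 / (1 - p_key)` exactly cancels the weight `1 - p_key` of
the remaining letters, so `f(p) = g(p̃)`. All values of `f` lie below `max g`, with `f(δ_⊥) = max g`.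
For the variance, `Var(f) ≤ E[(f - max g)²]`; the `⊥` term vanishes and each other letter
contributes `(1 - p_key) · (1 - p_key)⁻² (g(δ_c) - max g)² ≤ (1 - p_key)⁻¹ (max g - min g)²`. -/

section WeightedSums

variable {α : Type*} [Fintype α]

theorem sum_mul_sub_of_sum_eq_one {q : α → ℝ} (hq : ∑ c, q c = 1) (X : α → ℝ) (a : ℝ) :
    ∑ c, q c * (X c - a) = ∑ c, q c * X c - a := by
  simp only [mul_sub, Finset.sum_sub_distrib, ← Finset.sum_mul, hq, one_mul]

theorem sum_mul_le_of_le {q : α → ℝ} (hq : IsDist q) {X : α → ℝ} {b : ℝ} (hX : ∀ c, X c ≤ b) :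
    ∑ c, q c * X c ≤ b := by
  have : ∑ c, q c * (X c - b) ≤ 0 :=
    Finset.sum_nonpos fun c _ => mul_nonpos_of_nonneg_of_nonpos (hq.1 c) (sub_nonpos.2 (hX c))
  linarith [sum_mul_sub_of_sum_eq_one hq.2 X b]

theorem sq_sum_mul_le_sum_mul_sq {q : α → ℝ} (hq : IsDist q) (X : α → ℝ) :
    (∑ c, q c * X c) ^ 2 ≤ ∑ c, q c * X c ^ 2 := by
  simpa only [smul_eq_mul] using
    even_two.convexOn_pow.map_sum_le (t := Finset.univ) (w := q) (p := X) (fun c _ => hq.1 c) hq.2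
      fun c _ => Set.mem_univ _

theorem sum_mul_sq_sub_sq_sum_le {q : α → ℝ} (hq : ∑ c, q c = 1) (X : α → ℝ) (a : ℝ) :
    (∑ c, q c * X c ^ 2) - (∑ c, q c * X c) ^ 2 ≤ ∑ c, q c * (X c - a) ^ 2 := by
  have expand : ∑ c, q c * (X c - a) ^ 2
      = (∑ c, q c * X c ^ 2) - 2 * a * ∑ c, q c * X c + a ^ 2 * ∑ c, q c := by
    have h c : q c * (X c - a) ^ 2 = q c * X c ^ 2 - 2 * a * (q c * X c) + a ^ 2 * q c := by ring
    simp only [h, Finset.sum_add_distrib, Finset.sum_sub_distrib, ← Finset.mul_sum]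
  rw [hq, mul_one] at expand
  nlinarith [sq_nonneg (∑ c, q c * X c - a)]

theorem sum_pointDist_mul [DecidableEq α] (a : α) (X : α → ℝ) :
    ∑ c, pointDist a c * X c = X a := by
  simp [pointDist]

theorem eq_sum_mul_pointDist_of_affine {g : (α → ℝ) → ℝ} {G₀ : ℝ} {ν : α → ℝ} [DecidableEq α]
    (hgaff : ∀ p : α → ℝ, g p = G₀ + ∑ c, ν c * p c) {p : α → ℝ} (hp : ∑ c, p c = 1) :
    g p = ∑ c, p c * g (pointDist c) := by
  have hvertex c : g (pointDist c) = G₀ + ν c := by simp [hgaff, pointDist]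
  simp only [hgaff p, hvertex, mul_add, Finset.sum_add_distrib, ← Finset.sum_mul, hp, one_mul]
  exact congrArg _ (Finset.sum_congr rfl fun c _ => mul_comm _ _)

end WeightedSums

def optionDist {α : Type*} (pkey : ℝ) (pt : α → ℝ) : Option α → ℝ :=
  fun c => Option.casesOn c pkey (fun c' => (1 - pkey) * pt c')

section OptionDist

variable {α : Type*} [Fintype α] {pkey : ℝ} {pt : α → ℝ}

theorem sum_optionDist_mul (X : Option α → ℝ) :
    ∑ c, optionDist pkey pt c * X c = pkey * X none + (1 - pkey) * ∑ c, pt c * X (some c) := by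
  simp only [Fintype.sum_option, optionDist, Finset.mul_sum, mul_assoc]

theorem sum_optionDist (hpt : ∑ c, pt c = 1) : ∑ c, optionDist pkey pt c = 1 := by
  simpa [hpt] using sum_optionDist_mul (pkey := pkey) (pt := pt) fun _ => 1

theorem isDist_optionDist (hpkey0 : 0 ≤ pkey) (hpkey1 : pkey ≤ 1) (hpt : IsDist pt) :
    IsDist (optionDist pkey pt) := by
  refine ⟨fun c => ?_, sum_optionDist hpt.2⟩
  cases c with
  | none => exact hpkey0
  | some c => exact mul_nonneg (sub_nonneg.2 hpkey1) (hpt.1 c)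

end OptionDist

section MinTradeoff

variable {g : (C' → ℝ) → ℝ} {pkey : ℝ}

theorem le_maxg (g : (C' → ℝ) → ℝ) (c : C') : g (pointDist c) ≤ maxg g :=
  Finset.le_sup' (fun c => g (pointDist c)) (Finset.mem_univ c)

theorem ming_le (g : (C' → ℝ) → ℝ) (c : C') : ming g ≤ g (pointDist c) :=
  Finset.inf'_le (fun c => g (pointDist c)) (Finset.mem_univ c)

theorem sq_sub_maxg_le (g : (C' → ℝ) → ℝ) (c : C') :
    (g (pointDist c) - maxg g) ^ 2 ≤ (maxg g - ming g) ^ 2 := by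
  have h₁ := le_maxg g c
  have h₂ := ming_le g c
  nlinarith

theorem fPoint_none : fPoint g pkey none = maxg g := rfl

theorem fPoint_some_sub_maxg (c : C') :
    fPoint g pkey (some c) - maxg g = (1 / (1 - pkey)) * (g (pointDist c) - maxg g) := by
  simp [fPoint]

theorem fPoint_le_maxg (hpkey1 : pkey < 1) : ∀ c, fPoint g pkey c ≤ maxg g
  | none => le_rfl
  | some c => by
    have hk : 0 ≤ 1 / (1 - pkey) := one_div_nonneg.2 (by linarith)
    linarith [fPoint_some_sub_maxg (g := g) (pkey := pkey) c,
      mul_nonpos_of_nonneg_of_nonpos hk (sub_nonpos.2 (le_maxg g c))]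

theorem fAff_optionDist (hpkey1 : pkey < 1) {pt : C' → ℝ} (hpt : ∑ c, pt c = 1) :
    fAff g pkey (optionDist pkey pt) = ∑ c, pt c * g (pointDist c) := by
  have hne : 1 - pkey ≠ 0 := by linarith
  have key : fAff g pkey (optionDist pkey pt) - maxg g = ∑ c, pt c * g (pointDist c) - maxg g :=
    calc fAff g pkey (optionDist pkey pt) - maxg g
        = ∑ c, optionDist pkey pt c * (fPoint g pkey c - maxg g) :=
          (sum_mul_sub_of_sum_eq_one (sum_optionDist hpt) _ _).symm
      _ = ∑ c, pt c * (g (pointDist c) - maxg g) := by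
          simp only [sum_optionDist_mul, fPoint_none, fPoint_some_sub_maxg, sub_self, mul_zero,
            zero_add, Finset.mul_sum]
          exact Finset.sum_congr rfl fun c _ => by field_simp
      _ = ∑ c, pt c * g (pointDist c) - maxg g := sum_mul_sub_of_sum_eq_one hpt _ _
  linarith

theorem sum_optionDist_mul_sq_fPoint_sub_maxg (hpkey1 : pkey < 1) (pt : C' → ℝ) :
    ∑ c, optionDist pkey pt c * (fPoint g pkey c - maxg g) ^ 2
      = (1 / (1 - pkey)) * ∑ c, pt c * (g (pointDist c) - maxg g) ^ 2 := by
  have hne : 1 - pkey ≠ 0 := by linarith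
  simp only [sum_optionDist_mul, fPoint_none, fPoint_some_sub_maxg, sub_self, Finset.mul_sum]
  rw [zero_pow two_ne_zero, mul_zero, zero_add]
  exact Finset.sum_congr rfl fun c _ => by field_simp

theorem varf_nonneg {q : Option C' → ℝ} (hq : IsDist q) : 0 ≤ varf g pkey q :=
  sub_nonneg.2 (sq_sum_mul_le_sum_mul_sq hq _)

theorem varf_optionDist_le (hpkey1 : pkey < 1) {pt : C' → ℝ} (hpt : IsDist pt) :
    varf g pkey (optionDist pkey pt) ≤ (1 / (1 - pkey)) * (maxg g - ming g) ^ 2 := by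
  have hk : 0 ≤ 1 / (1 - pkey) := one_div_nonneg.2 (by linarith)
  calc varf g pkey (optionDist pkey pt)
      ≤ ∑ c, optionDist pkey pt c * (fPoint g pkey c - maxg g) ^ 2 :=
        sum_mul_sq_sub_sq_sum_le (sum_optionDist hpt.2) _ _
    _ = (1 / (1 - pkey)) * ∑ c, pt c * (g (pointDist c) - maxg g) ^ 2 :=
        sum_optionDist_mul_sq_fPoint_sub_maxg hpkey1 pt
    _ ≤ (1 / (1 - pkey)) * (maxg g - ming g) ^ 2 :=
        mul_le_mul_of_nonneg_left (sum_mul_le_of_le hpt (sq_sub_maxg_le g)) hk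

end MinTradeoff

/-- Conversion of a crossover min-tradeoff function `g` into a min-tradeoff function `f`:
on distributions of the form `p(c) = (1−p_key)pt(c)` for `c ∈ C̃`, `p(⊥) = p_key`,
one has `f(p) = g(pt)`; moreover `max f = max g` and
`0 ≤ Var(f) ≤ (1/(1−p_key))(max g − min g)²`. -/
theorem crossover_to_min_tradeoff
    (g : (C' → ℝ) → ℝ) (G₀ : ℝ) (ν : C' → ℝ)
    (hgaff : ∀ p : C' → ℝ, g p = G₀ + ∑ c, ν c * p c)
    (pkey : ℝ) (hpkey0 : 0 ≤ pkey) (hpkey1 : pkey < 1) :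
    (∀ pt : C' → ℝ, IsDist pt →
      fAff g pkey (fun c => Option.casesOn c pkey (fun c' => (1 - pkey) * pt c')) = g pt) ∧
    (∀ q : Option C' → ℝ, IsDist q → fAff g pkey q ≤ maxg g) ∧
    fAff g pkey (pointDist none) = maxg g ∧
    (∀ pt : C' → ℝ, IsDist pt →
      0 ≤ varf g pkey (fun c => Option.casesOn c pkey (fun c' => (1 - pkey) * pt c')) ∧
      varf g pkey (fun c => Option.casesOn c pkey (fun c' => (1 - pkey) * pt c')) ≤
        (1 / (1 - pkey)) * (maxg g - ming g) ^ 2) := by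
  refine ⟨fun pt hpt => ?_, fun q hq => sum_mul_le_of_le hq (fPoint_le_maxg hpkey1),
    sum_pointDist_mul none _, fun pt hpt => ?_⟩
  · rw [eq_sum_mul_pointDist_of_affine hgaff hpt.2]
    exact fAff_optionDist hpkey1 hpt.2
  · exact ⟨varf_nonneg (isDist_optionDist hpkey0 hpkey1.le hpt), varf_optionDist_le hpkey1 hpt⟩

end
end

section
/- Multinomial concentration for affine statistics: let c₁,...,cₙ be i.i.d. samples from a distribution π on a finite alphabet of size K+1, let π̂ be the empirical frequency distribution, and let h ∈ ℝ^{K+1} be a fixed coefficient vector. Then for any ε ∈ (0,1), with probability at least 1 − ε, |(π̂ − π)ᵀh| ≤ 2√(log(n/ε) · Σ_{i=1}^{K} γᵢcᵢ²/n) + (3D/n)·log(2/ε), where γᵢ = πᵢ(1 − Σ_{j≤i}πⱼ)/(1 − Σ_{j<i}πⱼ), cᵢ = hᵢ − (Σ_{j>i} hⱼπⱼ)/(1 − Σ_{j≤i}πⱼ), and D = max_{i,j}|hᵢ − hⱼ|. -/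
/-!
The coefficients telescope: if `tailVar π h k` is the unnormalised π-variance of `h` over the
tail `{j ≥ k}`, then `γᵢcᵢ² = tailVar i − tailVar (i+1)`, so `Σᵢ γᵢcᵢ² = Var_π h =: σ²`.

With `g = h − πᵀh` we have `n(π̂ − π)ᵀh = Σⱼ g(ωⱼ)` and `|g| ≤ D`. For `0 ≤ λ ≤ 1/D` the Chernoff
bound and `eˣ ≤ 1 + x + x²` on `[−1, 1]` give `P(Σⱼ g(ωⱼ) ≥ nt) ≤ exp(−λnt + nλ²σ²)`, and
`λ = min(t/(2σ²), 1/D)` makes this at most `ε/2` as soon as `t ≥ 2√(σ² log(2/ε)/n)` and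
`t ≥ 2D log(2/ε)/n`. The stated bound satisfies both because `log₂ ≥ ln` on `[1, ∞)`, except when
`3D log₂(2/ε)/n ≥ D` (e.g. `n = 1`); then it holds for every sample, as `|(π̂ − π)ᵀh| ≤ D`.
-/

open Finset

noncomputable section

open scoped Classical in
/-- Probability of an event for `n` i.i.d. samples from a distribution `π` on a finite
alphabet. -/
noncomputable def iidPr {K n : ℕ} (π : Fin (K + 1) → ℝ)
    (A : (Fin n → Fin (K + 1)) → Prop) : ℝ :=
  ∑ ω ∈ Finset.univ.filter (fun ω => A ω), ∏ i, π (ω i)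

/-- Empirical frequency of symbol `c` among the samples `ω`. -/
noncomputable def freq {K n : ℕ} (ω : Fin n → Fin (K + 1)) (c : Fin (K + 1)) : ℝ :=
  (Finset.univ.filter (fun j => ω j = c)).card / (n : ℝ)

/-- `γᵢ = πᵢ(1 − Σ_{j≤i}πⱼ)/(1 − Σ_{j<i}πⱼ)`. -/
noncomputable def gammaCoef {K : ℕ} (π : Fin (K + 1) → ℝ) (i : Fin K) : ℝ :=
  π i.castSucc * (1 - ∑ j ∈ Finset.univ.filter (fun j => j ≤ i.castSucc), π j) /
    (1 - ∑ j ∈ Finset.univ.filter (fun j => j < i.castSucc), π j)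

/-- `cᵢ = hᵢ − (Σ_{j>i} hⱼπⱼ)/(1 − Σ_{j≤i}πⱼ)`. -/
noncomputable def cCoef {K : ℕ} (π h : Fin (K + 1) → ℝ) (i : Fin K) : ℝ :=
  h i.castSucc - (∑ j ∈ Finset.univ.filter (fun j => i.castSucc < j), h j * π j) /
    (1 - ∑ j ∈ Finset.univ.filter (fun j => j ≤ i.castSucc), π j)

/-- `D = max_{i,j}|hᵢ − hⱼ|`. -/
noncomputable def Dspread {K : ℕ} (h : Fin (K + 1) → ℝ) : ℝ :=
  Finset.univ.sup' Finset.univ_nonempty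
    (fun p : Fin (K + 1) × Fin (K + 1) => |h p.1 - h p.2|)

lemma exists_chernoff_parameter {n D σ2 t u : ℝ} (hn : 0 ≤ n) (hD : 0 < D)
    (ht : 0 ≤ t) (hvar : 4 * σ2 * u ≤ n * t ^ 2) (hrange : 2 * D * u ≤ n * t) :
    ∃ l, 0 ≤ l ∧ l * D ≤ 1 ∧ -(l * (n * t)) + n * (l ^ 2 * σ2) ≤ -u := by
  rcases le_or_gt (2 * σ2) (t * D) with hcase | hcase
  · refine ⟨1 / D, by positivity, by field_simp; rfl, ?_⟩
    have : n * σ2 / D ^ 2 ≤ n * t / (2 * D) := by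
      rw [div_le_div_iff₀ (by positivity) (by positivity)]
      nlinarith [mul_le_mul_of_nonneg_left hcase (mul_nonneg hn hD.le)]
    have : u ≤ n * t / (2 * D) := by rw [le_div_iff₀ (by positivity)]; linarith
    have : -(1 / D * (n * t)) + n * ((1 / D) ^ 2 * σ2) = -(n * t / D) + n * σ2 / D ^ 2 := by ring
    have : n * t / D = n * t / (2 * D) + n * t / (2 * D) := by field_simp; ring
    linarith
  · have hσ : 0 < σ2 := by nlinarith
    refine ⟨t / (2 * σ2), by positivity, ?_, ?_⟩
    · rw [div_mul_eq_mul_div, div_le_one (by positivity)]; exact hcase.le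
    · have : -(t / (2 * σ2) * (n * t)) + n * ((t / (2 * σ2)) ^ 2 * σ2)
          = -(n * t ^ 2 / (4 * σ2)) := by
        field_simp
        ring
      rw [this, neg_le_neg_iff, le_div_iff₀ (by positivity)]
      linarith

lemma sum_mul_exp_le_exp_sum_mul_sq {α : Type*} [Fintype α] {p g : α → ℝ} (hp0 : ∀ c, 0 ≤ p c)
    (hp1 : ∑ c, p c = 1) (hg0 : ∑ c, p c * g c = 0) (hg1 : ∀ c, |g c| ≤ 1) :
    ∑ c, p c * Real.exp (g c) ≤ Real.exp (∑ c, p c * g c ^ 2) :=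
  calc ∑ c, p c * Real.exp (g c) ≤ ∑ c, p c * (1 + g c + g c ^ 2) := by
        gcongr with c
        · exact hp0 c
        · linarith [(abs_le.mp (Real.abs_exp_sub_one_sub_id_le (hg1 c))).2]
    _ = 1 + ∑ c, p c * g c ^ 2 := by
        simp only [mul_add, mul_one, sum_add_distrib, hp1, hg0, add_zero]
    _ ≤ Real.exp (∑ c, p c * g c ^ 2) := by linarith [Real.add_one_le_exp (∑ c, p c * g c ^ 2)]

section iidPr

open scoped Classical

variable {K n : ℕ} {π : Fin (K + 1) → ℝ}

lemma sum_prod_eq_one (hπ1 : ∑ i, π i = 1) : ∑ ω : Fin n → Fin (K + 1), ∏ i, π (ω i) = 1 := by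
  rw [← Fintype.prod_sum (fun _ : Fin n => π)]
  simp [hπ1]

lemma iidPr_eq_one (hπ1 : ∑ i, π i = 1) {A : (Fin n → Fin (K + 1)) → Prop} (hA : ∀ ω, A ω) :
    iidPr π A = 1 := by
  rw [iidPr, filter_true_of_mem fun ω _ => hA ω, sum_prod_eq_one hπ1]

lemma iidPr_add_iidPr_not (hπ1 : ∑ i, π i = 1) (A : (Fin n → Fin (K + 1)) → Prop) :
    iidPr π A + iidPr π (fun ω => ¬ A ω) = 1 := by
  rw [iidPr, iidPr, sum_filter_add_sum_filter_not, sum_prod_eq_one hπ1]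

lemma iidPr_mono (hπ0 : ∀ i, 0 ≤ π i) {A B : (Fin n → Fin (K + 1)) → Prop}
    (hAB : ∀ ω, A ω → B ω) : iidPr π A ≤ iidPr π B :=
  sum_le_sum_of_subset_of_nonneg (monotone_filter_right _ fun ω _ => hAB ω)
    fun _ _ _ => prod_nonneg fun _ _ => hπ0 _

lemma iidPr_or_le (hπ0 : ∀ i, 0 ≤ π i) (A B : (Fin n → Fin (K + 1)) → Prop) :
    iidPr π (fun ω => A ω ∨ B ω) ≤ iidPr π A + iidPr π B := by
  rw [iidPr, iidPr, iidPr, sum_filter, sum_filter, sum_filter, ← sum_add_distrib]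
  gcongr with ω
  have := prod_nonneg fun i (_ : i ∈ univ) => hπ0 (ω i)
  split_ifs <;> simp_all

lemma iidPr_le_exp_mul_mgf_pow (hπ0 : ∀ i, 0 ≤ π i) (g : Fin (K + 1) → ℝ) {l : ℝ} (hl : 0 ≤ l)
    (a : ℝ) : iidPr (n := n) π (fun ω => a ≤ ∑ j, g (ω j)) ≤
      Real.exp (-(l * a)) * (∑ c, π c * Real.exp (l * g c)) ^ n := by
  have tilt (ω : Fin n → Fin (K + 1)) :
      Real.exp (-(l * a)) * ∏ i, (π (ω i) * Real.exp (l * g (ω i)))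
      = (∏ i, π (ω i)) * Real.exp (l * (∑ j, g (ω j) - a)) := by
    rw [prod_mul_distrib, ← Real.exp_sum, ← mul_sum, mul_left_comm, ← Real.exp_add]
    ring_nf
  calc iidPr π _
      ≤ ∑ ω : Fin n → Fin (K + 1),
          Real.exp (-(l * a)) * ∏ i, (π (ω i) * Real.exp (l * g (ω i))) := by
        rw [iidPr, sum_filter]
        gcongr with ω
        simp only [tilt]
        split_ifs with hω
        · exact le_mul_of_one_le_right (prod_nonneg fun _ _ => hπ0 _)
            (Real.one_le_exp (mul_nonneg hl (sub_nonneg.mpr hω)))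
        · exact mul_nonneg (prod_nonneg fun _ _ => hπ0 _) (Real.exp_pos _).le
    _ = _ := by
        rw [← mul_sum, ← Fintype.prod_sum fun (_ : Fin n) c => π c * Real.exp (l * g c),
          prod_const, card_univ, Fintype.card_fin]

end iidPr

section deviation

variable {K n : ℕ}

lemma abs_sub_le_Dspread (h : Fin (K + 1) → ℝ) (c d : Fin (K + 1)) : |h c - h d| ≤ Dspread h :=
  le_sup' (fun p : Fin (K + 1) × Fin (K + 1) => |h p.1 - h p.2|) (mem_univ (c, d))

lemma Dspread_nonneg (h : Fin (K + 1) → ℝ) : 0 ≤ Dspread h :=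
  (abs_nonneg _).trans (abs_sub_le_Dspread h 0 0)

lemma abs_sub_sum_mul_le_Dspread {π : Fin (K + 1) → ℝ} (hπ0 : ∀ i, 0 ≤ π i)
    (hπ1 : ∑ i, π i = 1) (h : Fin (K + 1) → ℝ) (c : Fin (K + 1)) :
    |h c - ∑ j, π j * h j| ≤ Dspread h :=
  calc |h c - ∑ j, π j * h j| = |∑ j, π j * (h c - h j)| := by
        simp only [mul_sub, sum_sub_distrib, ← sum_mul, hπ1, one_mul]
    _ ≤ ∑ j, π j * Dspread h := by
        refine (abs_sum_le_sum_abs _ _).trans (sum_le_sum fun j _ => ?_)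
        rw [abs_mul, abs_of_nonneg (hπ0 j)]
        exact mul_le_mul_of_nonneg_left (abs_sub_le_Dspread h c j) (hπ0 j)
    _ = Dspread h := by rw [← sum_mul, hπ1, one_mul]

lemma sum_card_filter_mul (ω : Fin n → Fin (K + 1)) (F : Fin (K + 1) → ℝ) :
    ∑ c, ((univ.filter fun j => ω j = c).card : ℝ) * F c = ∑ j, F (ω j) := by
  simp_rw [← nsmul_eq_mul, ← sum_const]
  exact sum_fiberwise' univ ω F

lemma mul_sum_freq_sub_mul (hn : 0 < n) (ω : Fin n → Fin (K + 1)) (π h : Fin (K + 1) → ℝ) :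
    n * ∑ i, (freq ω i - π i) * h i = ∑ j, (h (ω j) - ∑ c, π c * h c) := by
  have hn' : (n : ℝ) ≠ 0 := by positivity
  simp only [freq, sub_mul, sum_sub_distrib, mul_sub, div_mul_eq_mul_div, ← sum_div,
    mul_div_cancel₀ _ hn', sum_card_filter_mul, sum_const, card_univ, Fintype.card_fin,
    nsmul_eq_mul]

lemma abs_sum_freq_sub_mul_le_Dspread (hn : 0 < n) {π : Fin (K + 1) → ℝ}
    (hπ0 : ∀ i, 0 ≤ π i) (hπ1 : ∑ i, π i = 1) (h : Fin (K + 1) → ℝ) (ω : Fin n → Fin (K + 1)) :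
    |∑ i, (freq ω i - π i) * h i| ≤ Dspread h := by
  have hn' : (0 : ℝ) < n := by positivity
  refine le_of_mul_le_mul_left ?_ hn'
  calc n * |∑ i, (freq ω i - π i) * h i| = |∑ j, (h (ω j) - ∑ c, π c * h c)| := by
        rw [← mul_sum_freq_sub_mul hn, abs_mul, abs_of_pos hn']
    _ ≤ ∑ j, |h (ω j) - ∑ c, π c * h c| := abs_sum_le_sum_abs _ _
    _ ≤ ∑ _j : Fin n, Dspread h := sum_le_sum fun j _ => abs_sub_sum_mul_le_Dspread hπ0 hπ1 h _
    _ = n * Dspread h := by simp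

end deviation

section bernstein

variable {K n : ℕ} {π : Fin (K + 1) → ℝ}

lemma iidPr_le_exp_neg (hπ0 : ∀ i, 0 ≤ π i) (hπ1 : ∑ i, π i = 1) {g : Fin (K + 1) → ℝ}
    {D t u : ℝ} (hg0 : ∑ c, π c * g c = 0) (hgD : ∀ c, |g c| ≤ D) (hD : 0 < D) (ht : 0 ≤ t)
    (hvar : 4 * (∑ c, π c * g c ^ 2) * u ≤ n * t ^ 2) (hrange : 2 * D * u ≤ n * t) :
    iidPr (n := n) π (fun ω => n * t ≤ ∑ j, g (ω j)) ≤ Real.exp (-u) := by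
  obtain ⟨l, hl0, hlD, hl⟩ := exists_chernoff_parameter n.cast_nonneg hD ht hvar hrange
  have hlg : ∀ c, |l * g c| ≤ 1 := fun c => by
    rw [abs_mul, abs_of_nonneg hl0]
    exact (mul_le_mul_of_nonneg_left (hgD c) hl0).trans hlD
  have hmgf := sum_mul_exp_le_exp_sum_mul_sq hπ0 hπ1
    (by simp only [mul_left_comm _ l, ← mul_sum, hg0, mul_zero]) hlg
  calc iidPr π _ ≤ Real.exp (-(l * (n * t))) * (∑ c, π c * Real.exp (l * g c)) ^ n :=
        iidPr_le_exp_mul_mgf_pow hπ0 g hl0 _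
    _ ≤ Real.exp (-(l * (n * t))) * Real.exp (∑ c, π c * (l * g c) ^ 2) ^ n := by
        gcongr
        exact sum_nonneg fun c _ => mul_nonneg (hπ0 c) (Real.exp_pos _).le
    _ = Real.exp (-(l * (n * t)) + n * (l ^ 2 * ∑ c, π c * g c ^ 2)) := by
        rw [← Real.exp_nat_mul, ← Real.exp_add, mul_sum, mul_sum, mul_sum]
        congr 2
        exact sum_congr rfl fun c _ => by ring
    _ ≤ Real.exp (-u) := Real.exp_le_exp.mpr hl

lemma one_sub_two_mul_exp_le_iidPr_abs_le (hπ0 : ∀ i, 0 ≤ π i) (hπ1 : ∑ i, π i = 1)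
    (hn : 0 < n) {h : Fin (K + 1) → ℝ} {t u : ℝ} (hD : 0 < Dspread h) (ht : 0 ≤ t)
    (hvar : 4 * (∑ c, π c * (h c - ∑ j, π j * h j) ^ 2) * u ≤ n * t ^ 2)
    (hrange : 2 * Dspread h * u ≤ n * t) :
    1 - 2 * Real.exp (-u) ≤ iidPr (n := n) π (fun ω => |∑ i, (freq ω i - π i) * h i| ≤ t) := by
  set g := fun c => h c - ∑ j, π j * h j
  have hg0 : ∑ c, π c * g c = 0 := by
    simp only [g, mul_sub, sum_sub_distrib, ← sum_mul, hπ1, one_mul, sub_self]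
  have hgD : ∀ c, |g c| ≤ Dspread h := abs_sub_sum_mul_le_Dspread hπ0 hπ1 h
  have hupper := iidPr_le_exp_neg hπ0 hπ1 hg0 hgD hD ht hvar hrange
  have hlower := iidPr_le_exp_neg (n := n) hπ0 hπ1 (g := fun c => -g c)
    (by simp [hg0]) (by simpa using hgD) hD ht (by simpa using hvar) hrange
  have hsplit : ∀ ω : Fin n → Fin (K + 1), ¬ |∑ i, (freq ω i - π i) * h i| ≤ t →
      n * t ≤ ∑ j, g (ω j) ∨ n * t ≤ ∑ j, -g (ω j) := by
    intro ω hω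
    rw [sum_neg_distrib, ← mul_sum_freq_sub_mul hn ω π h, ← mul_neg]
    rcases lt_abs.mp (not_le.mp hω) with hpos | hneg
    exacts [.inl (by gcongr), .inr (by gcongr)]
  linarith [iidPr_add_iidPr_not hπ1 (n := n) (fun ω => |∑ i, (freq ω i - π i) * h i| ≤ t),
    iidPr_mono hπ0 hsplit, iidPr_or_le hπ0 (n := n) (fun ω => n * t ≤ ∑ j, g (ω j))
      (fun ω => n * t ≤ ∑ j, -g (ω j))]

lemma iidPr_abs_sum_freq_sub_mul_le_eq_one (hn : 0 < n)
    (hπ0 : ∀ i, 0 ≤ π i) (hπ1 : ∑ i, π i = 1) {h : Fin (K + 1) → ℝ} {t : ℝ}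
    (ht : Dspread h ≤ t) :
    iidPr (n := n) π (fun ω => |∑ i, (freq ω i - π i) * h i| ≤ t) = 1 :=
  iidPr_eq_one hπ1 fun ω => (abs_sum_freq_sub_mul_le_Dspread hn hπ0 hπ1 h ω).trans ht

end bernstein

lemma mul_div_add_mul_sub_div_sq {a R b M : ℝ} (ha : 0 ≤ a) (hR : 0 ≤ R) (hM : R = 0 → M = 0) :
    a * R / (a + R) * (b - M / R) ^ 2 = a * b ^ 2 + M ^ 2 / R - (b * a + M) ^ 2 / (a + R) := by
  rcases hR.eq_or_lt with rfl | hR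
  · rcases ha.eq_or_lt with rfl | ha
    · simp [hM rfl]
    · field_simp
      simp [hM rfl]
      ring
  · field_simp
    ring

section variance

variable {K : ℕ}

def tailSum (f : Fin (K + 1) → ℝ) (k : ℕ) : ℝ :=
  ∑ j ∈ univ.filter fun j : Fin (K + 1) => k ≤ (j : ℕ), f j

def tailVar (π h : Fin (K + 1) → ℝ) (k : ℕ) : ℝ :=
  tailSum (fun j => π j * h j ^ 2) k - tailSum (fun j => h j * π j) k ^ 2 / tailSum π k

lemma tailSum_eq_add (f : Fin (K + 1) → ℝ) {k : ℕ} (hk : k < K + 1) :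
    tailSum f k = f ⟨k, hk⟩ + tailSum f (k + 1) := by
  rw [tailSum, tailSum, ← sum_insert (by simp)]
  congr 1
  ext j
  simp only [mem_filter, mem_univ, true_and, mem_insert, Fin.ext_iff]
  omega

lemma tailSum_zero (f : Fin (K + 1) → ℝ) : tailSum f 0 = ∑ j, f j := by
  simp [tailSum]

lemma tailSum_self (f : Fin (K + 1) → ℝ) : tailSum f K = f (Fin.last K) := by
  rw [tailSum, ← sum_singleton f (Fin.last K)]
  congr 1
  ext j
  simp only [mem_filter, mem_univ, true_and, mem_singleton, Fin.ext_iff, Fin.val_last]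
  omega

lemma tailSum_succ_eq_sum_filter_castSucc_lt (f : Fin (K + 1) → ℝ) (i : Fin K) :
    tailSum f (i + 1) = ∑ j ∈ univ.filter fun j => i.castSucc < j, f j :=
  rfl

lemma one_sub_sum_filter_le_castSucc {π : Fin (K + 1) → ℝ} (hπ1 : ∑ i, π i = 1) (i : Fin K) :
    1 - ∑ j ∈ univ.filter fun j => j ≤ i.castSucc, π j = tailSum π (i + 1) := by
  rw [← hπ1, ← sum_filter_add_sum_filter_not univ fun j => j ≤ i.castSucc,
    tailSum_succ_eq_sum_filter_castSucc_lt]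
  simp only [not_le, add_sub_cancel_left]

lemma one_sub_sum_filter_lt_castSucc {π : Fin (K + 1) → ℝ} (hπ1 : ∑ i, π i = 1) (i : Fin K) :
    1 - ∑ j ∈ univ.filter fun j => j < i.castSucc, π j = tailSum π i := by
  rw [← hπ1, ← sum_filter_add_sum_filter_not univ fun j => j < i.castSucc, add_sub_cancel_left,
    tailSum]
  congr 1
  ext j
  simp [Fin.le_def]

lemma tailSum_nonneg {π : Fin (K + 1) → ℝ} (hπ0 : ∀ i, 0 ≤ π i) (k : ℕ) : 0 ≤ tailSum π k :=
  sum_nonneg fun j _ => hπ0 j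

lemma tailSum_mul_eq_zero {π : Fin (K + 1) → ℝ} (hπ0 : ∀ i, 0 ≤ π i) (h : Fin (K + 1) → ℝ)
    {k : ℕ} (hk : tailSum π k = 0) : tailSum (fun j => h j * π j) k = 0 := by
  rw [tailSum, sum_eq_zero_iff_of_nonneg fun j _ => hπ0 j] at hk
  exact sum_eq_zero fun j hj => by rw [hk j hj, mul_zero]

lemma gammaCoef_mul_cCoef_sq {π : Fin (K + 1) → ℝ} (hπ0 : ∀ i, 0 ≤ π i) (hπ1 : ∑ i, π i = 1)
    (h : Fin (K + 1) → ℝ) (i : Fin K) :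
    gammaCoef π i * cCoef π h i ^ 2 = tailVar π h i - tailVar π h (i + 1) := by
  have hi : (i : ℕ) < K + 1 := i.castSucc.isLt
  rw [gammaCoef, cCoef, one_sub_sum_filter_le_castSucc hπ1, one_sub_sum_filter_lt_castSucc hπ1,
    ← tailSum_succ_eq_sum_filter_castSucc_lt, tailVar, tailVar, tailSum_eq_add _ hi,
    tailSum_eq_add _ hi, tailSum_eq_add _ hi, Fin.castSucc_mk,
    mul_div_add_mul_sub_div_sq (hπ0 _) (tailSum_nonneg hπ0 _) (tailSum_mul_eq_zero hπ0 h)]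
  ring

lemma sum_gammaCoef_mul_cCoef_sq {π : Fin (K + 1) → ℝ} (hπ0 : ∀ i, 0 ≤ π i)
    (hπ1 : ∑ i, π i = 1) (h : Fin (K + 1) → ℝ) :
    ∑ i : Fin K, gammaCoef π i * cCoef π h i ^ 2 = ∑ c, π c * (h c - ∑ j, π j * h j) ^ 2 := by
  have hlast : tailVar π h K = 0 := by
    rw [tailVar, tailSum_self, tailSum_self, tailSum_self]
    rcases eq_or_ne (π (Fin.last K)) 0 with h0 | h0
    · simp [h0]
    · field_simp
      ring
  rw [sum_congr rfl fun i _ => gammaCoef_mul_cCoef_sq hπ0 hπ1 h i,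
    Fin.sum_univ_eq_sum_range (fun k => tailVar π h k - tailVar π h (k + 1)), sum_range_sub',
    hlast, sub_zero, tailVar, tailSum_zero, tailSum_zero, tailSum_zero, hπ1, div_one]
  have hexpand : ∀ c, π c * (h c - ∑ j, π j * h j) ^ 2
      = π c * h c ^ 2 - 2 * (∑ j, π j * h j) * (h c * π c) + (∑ j, π j * h j) ^ 2 * π c :=
    fun c => by ring
  rw [sum_congr rfl fun c _ => hexpand c, sum_add_distrib, sum_sub_distrib, ← mul_sum, ← mul_sum,
    hπ1]
  simp only [mul_comm (h _) (π _)]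
  ring

end variance

lemma log_le_logb_two {x : ℝ} (hx : 1 ≤ x) : Real.log x ≤ Real.logb 2 x := by
  rw [Real.logb, le_div_iff₀ (Real.log_pos one_lt_two)]
  exact mul_le_of_le_one_right (Real.log_nonneg hx) (by linarith [Real.log_two_lt_d9])

lemma log_two_div_le_logb_two_div {ε m : ℝ} (hε0 : 0 < ε) (hε2 : ε ≤ 2) (hm : 2 ≤ m) :
    Real.log (2 / ε) ≤ Real.logb 2 (m / ε) :=
  (Real.log_le_log (by positivity) (by gcongr)).trans
    (log_le_logb_two (by rw [le_div_iff₀ hε0]; linarith))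

lemma four_mul_mul_le_mul_sq {n σ2 L u t : ℝ} (hn : 0 < n) (hσ2 : 0 ≤ σ2) (hu : 0 ≤ u)
    (huL : u ≤ L) (ht : 2 * √(L * σ2 / n) ≤ t) : 4 * σ2 * u ≤ n * t ^ 2 := by
  have hLσ2 : 0 ≤ L * σ2 / n := div_nonneg (mul_nonneg (hu.trans huL) hσ2) hn.le
  calc 4 * σ2 * u ≤ n * (2 * √(L * σ2 / n)) ^ 2 := by
        rw [mul_pow, Real.sq_sqrt hLσ2, mul_left_comm, mul_div_cancel₀ _ hn.ne']
        nlinarith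
    _ ≤ n * t ^ 2 := by gcongr

lemma two_mul_mul_le_mul_add {n D u L s : ℝ} (hn : 0 < n) (hD : 0 ≤ D) (hu : 0 ≤ u)
    (huL : u ≤ L) (hs : 0 ≤ s) : 2 * D * u ≤ n * (s + 3 * D / n * L) := by
  have : n * (3 * D / n * L) = 3 * D * L := by field_simp
  nlinarith [mul_le_mul_of_nonneg_left huL hD, mul_nonneg hD hu, mul_nonneg hn.le hs]

/-- Multinomial concentration for affine statistics: with probability at least `1 − ε`,
`|(π̂ − π)ᵀh| ≤ 2√(log(n/ε)·Σᵢ γᵢcᵢ²/n) + (3D/n)·log(2/ε)`. -/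
theorem multinomial_affine_concentration {K n : ℕ} (hn : 0 < n)
    (π : Fin (K + 1) → ℝ) (hπ0 : ∀ i, 0 ≤ π i) (hπ1 : ∑ i, π i = 1)
    (h : Fin (K + 1) → ℝ) (ε : ℝ) (hε0 : 0 < ε) (hε1 : ε < 1) :
    1 - ε ≤ iidPr (n := n) π (fun ω =>
      |∑ i, (freq ω i - π i) * h i| ≤
        2 * Real.sqrt (Real.logb 2 ((n : ℝ) / ε) *
            ∑ i : Fin K, gammaCoef π i * (cCoef π h i) ^ 2 / (n : ℝ)) +
          (3 * Dspread h / (n : ℝ)) * Real.logb 2 (2 / ε)) := by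
  rw [← sum_div, sum_gammaCoef_mul_cCoef_sq hπ0 hπ1, ← mul_div_assoc]
  set σ2 := ∑ c, π c * (h c - ∑ j, π j * h j) ^ 2
  set L1 := Real.logb 2 (n / ε)
  set L2 := Real.logb 2 (2 / ε)
  set D := Dspread h
  have hD0 : 0 ≤ D := Dspread_nonneg h
  have hu : 0 ≤ Real.log (2 / ε) := Real.log_nonneg (by rw [le_div_iff₀ hε0]; linarith)
  have hL2 : Real.log (2 / ε) ≤ L2 := log_two_div_le_logb_two_div hε0 (by linarith) le_rfl
  have hL2one : 1 ≤ L2 := by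
    rw [← Real.logb_self_eq_one one_lt_two]
    exact Real.logb_le_logb_of_le one_lt_two two_pos (by rw [le_div_iff₀ hε0]; linarith)
  have hdev : 0 ≤ 3 * D / n * L2 := mul_nonneg (by positivity) (hu.trans hL2)
  by_cases hdet : D ≤ 3 * D / n * L2
  · rw [iidPr_abs_sum_freq_sub_mul_le_eq_one hn hπ0 hπ1
      (hdet.trans (le_add_of_nonneg_left (mul_nonneg zero_le_two (Real.sqrt_nonneg _))))]
    linarith
  have hD : 0 < D := hD0.lt_of_ne fun hD => hdet (by simp [← hD])
  have hn2 : (2 : ℝ) ≤ n := by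
    rw [not_le, div_mul_eq_mul_div, div_lt_iff₀ (by positivity)] at hdet
    nlinarith
  have hσ2 : 0 ≤ σ2 := sum_nonneg fun c _ => mul_nonneg (hπ0 c) (sq_nonneg _)
  have key := one_sub_two_mul_exp_le_iidPr_abs_le hπ0 hπ1 hn hD (by positivity)
    (four_mul_mul_le_mul_sq (by positivity) hσ2 hu
      (log_two_div_le_logb_two_div hε0 (by linarith) hn2) (le_add_of_nonneg_right hdev))
    (two_mul_mul_le_mul_add (by positivity) hD0 hu hL2 (by positivity))
  rwa [Real.exp_neg, Real.exp_log (by positivity), inv_div, mul_div_cancel₀ _ two_ne_zero] at key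

end
end
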